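/- arXiv:2512.03105 — 3 statements merged into one kernel-verified Lean document; each statement's English description precedes it below -/
import Mathlib

section
/- Let A be a natural number and B = ∑ j in range n, b j * 10^j with digits b j. Define c 0 = 0, and for each k, S k = A * b k + c k, r k = S k mod 10, c (k+1) = S k / 10. Then A * B = (∑ i in range n, r i * 10^i) + 10^n * c n. -/
/-! Each row step splits `S k = A * b k + c k` as `S k % β + β * (S k / β)`, so at weight `β ^ k`
the emitted digit and the carry passed to weight `β ^ (k + 1)` together account exactly for
`A * b k * β ^ k` plus the incoming carry; summing over `k` telescopes the carries. -/

theorem mod_mul_pow_add_pow_succ_mul_div (s β k : ℕ) :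
    s % β * β ^ k + β ^ (k + 1) * (s / β) = s * β ^ k := by
  calc s % β * β ^ k + β ^ (k + 1) * (s / β) = (s % β + β * (s / β)) * β ^ k := by ring
    _ = s * β ^ k := by rw [Nat.mod_add_div]

theorem mul_sum_digits_eq_sum_mod_add_carry (β A n : ℕ) (b c : ℕ → ℕ) (hc0 : c 0 = 0)
    (hc : ∀ k, c (k + 1) = (A * b k + c k) / β) :
    A * ∑ j ∈ Finset.range n, b j * β ^ j =
      (∑ i ∈ Finset.range n, (A * b i + c i) % β * β ^ i) + β ^ n * c n := by
  induction n with
  | zero => simp [hc0]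
  | succ k ih =>
    rw [Finset.sum_range_succ, Finset.sum_range_succ, mul_add, ih, hc k, add_assoc,
      add_assoc, mod_mul_pow_add_pow_succ_mul_div]
    ring

theorem stmt3_general (A B n : ℕ) (b c r : ℕ → ℕ)
    (hB : B = ∑ j ∈ Finset.range n, b j * 10 ^ j)
    (hc0 : c 0 = 0)
    (hr : ∀ k, r k = (A * b k + c k) % 10)
    (hc : ∀ k, c (k + 1) = (A * b k + c k) / 10) :
    A * B = (∑ i ∈ Finset.range n, r i * 10 ^ i) + 10 ^ n * c n := by
  simp only [hB, hr]
  exact mul_sum_digits_eq_sum_mod_add_carry 10 A n b c hc0 hc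

theorem stmt3 (A B n : ℕ) (b c r : ℕ → ℕ)
    (hn : 1 ≤ n)
    (hb : ∀ j < n, b j < 10)
    (hB : B = ∑ j ∈ Finset.range n, b j * 10 ^ j)
    (hc0 : c 0 = 0)
    (hr : ∀ k, r k = (A * b k + c k) % 10)
    (hc : ∀ k, c (k + 1) = (A * b k + c k) / 10) :
    A * B = (∑ i ∈ Finset.range n, r i * 10 ^ i) + 10 ^ n * c n :=
  stmt3_general A B n b c r hB hc0 hr hc
end

section
/- For any natural numbers A, c and any list ds of natural numbers, define f A [] c = c and f A (d :: ds) c = ((A * d + c) % 10) + 10 * f A ds ((A * d + c) / 10). Then f A ds c = A * Nat.ofDigits 10 ds + c. -/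
def f8 (A : ℕ) : List ℕ → ℕ → ℕ
  | [], c => c
  | d :: ds, c => (A * d + c) % 10 + 10 * f8 A ds ((A * d + c) / 10)

theorem stmt8 (A c : ℕ) (ds : List ℕ) :
    f8 A ds c = A * Nat.ofDigits 10 ds + c := by
  induction ds generalizing c with
  | nil => simp [f8, Nat.ofDigits]
  | cons d ds ih =>
    rw [f8, ih, Nat.ofDigits_cons]
    have := Nat.mod_add_div (A * d + c) 10
    ring_nf
    omega
end

section
/- In the alternative algorithm with c 0 = 0, c (k+1) = (A * b k + c k) / 10 and r k = (A * b k + c k) mod 10, the digits r i for i < k are unchanged if the algorithm is continued: they depend only on b 0, …, b k and A, and each r k equals the k-th base-10 digit of A * (∑ j in range (k+1), b j * 10^j) whenever that digit position is below k+1. Formally: for i ≤ k, r i = (A * ∑ j in range (k+1), b j * 10^j) / 10^i mod 10. -/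
/-!
Running the carry recursion to step `k` gives the invariant
`∑_{j ≤ k} a_j 10^j = ∑_{j ≤ k} r_j 10^j + 10^(k+1) c_(k+1)`. Since every `r_j` is a
digit, the right-hand side has `r_i` as its `i`-th base-10 digit for each `i ≤ k`.
-/

open Finset

theorem sum_mul_pow_eq_add_pow_mul_carry {B : ℕ} (a c r : ℕ → ℕ) (hc0 : c 0 = 0)
    (hr : ∀ k, r k = (a k + c k) % B) (hc : ∀ k, c (k + 1) = (a k + c k) / B) (n : ℕ) :
    ∑ j ∈ range n, a j * B ^ j = ∑ j ∈ range n, r j * B ^ j + B ^ n * c n := by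
  induction n with
  | zero => simp [hc0]
  | succ n ih =>
    have hdiv := Nat.mod_add_div (a n + c n) B
    rw [← hr, ← hc] at hdiv
    rw [sum_range_succ, ih, sum_range_succ]
    linear_combination B ^ n * hdiv.symm

theorem sum_mul_pow_add_pow_mul_eq (B m n : ℕ) (r : ℕ → ℕ) :
    ∑ j ∈ range (n + 1), r j * B ^ j + B ^ (n + 1) * m
      = r 0 + B * (∑ j ∈ range n, r (j + 1) * B ^ j + B ^ n * m) := by
  have hshift (j : ℕ) : r (j + 1) * B ^ (j + 1) = B * (r (j + 1) * B ^ j) := by ring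
  rw [sum_range_succ', mul_add, mul_sum]
  simp_rw [hshift]
  ring

theorem sum_mul_pow_add_pow_mul_div_pow_mod {B : ℕ} (r : ℕ → ℕ) (hr : ∀ j, r j < B)
    (m : ℕ) {i n : ℕ} (hin : i < n) :
    (∑ j ∈ range n, r j * B ^ j + B ^ n * m) / B ^ i % B = r i := by
  induction i generalizing r n with
  | zero =>
    obtain ⟨n, rfl⟩ := Nat.exists_eq_succ_of_ne_zero (Nat.ne_zero_of_lt hin)
    rw [sum_mul_pow_add_pow_mul_eq, pow_zero, Nat.div_one, Nat.add_mul_mod_self_left,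
      Nat.mod_eq_of_lt (hr 0)]
  | succ i ih =>
    obtain ⟨n, rfl⟩ := Nat.exists_eq_succ_of_ne_zero (Nat.ne_zero_of_lt hin)
    have hB : 0 < B := Nat.zero_lt_of_lt (hr 0)
    rw [sum_mul_pow_add_pow_mul_eq, pow_succ', ← Nat.div_div_eq_div_mul,
      Nat.add_mul_div_left _ _ hB, Nat.div_eq_of_lt (hr 0), zero_add]
    exact ih (fun j => r (j + 1)) (fun j => hr (j + 1)) (by omega)

theorem stmt10_general (A : ℕ) (b c r : ℕ → ℕ)
    (hc0 : c 0 = 0)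
    (hr : ∀ k, r k = (A * b k + c k) % 10)
    (hc : ∀ k, c (k + 1) = (A * b k + c k) / 10) :
    ∀ k, ∀ i ≤ k,
      r i = (A * ∑ j ∈ Finset.range (k + 1), b j * 10 ^ j) / 10 ^ i % 10 := by
  intro k i hik
  have hr_lt : ∀ j, r j < 10 := fun j => hr j ▸ Nat.mod_lt _ (by norm_num)
  simp_rw [mul_sum, ← mul_assoc]
  rw [sum_mul_pow_eq_add_pow_mul_carry (fun j => A * b j) c r hc0 hr hc,
    sum_mul_pow_add_pow_mul_div_pow_mod r hr_lt _ (Nat.lt_succ_of_le hik)]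

theorem stmt10 (A : ℕ) (b c r : ℕ → ℕ)
    (hb : ∀ j, b j ≤ 9)
    (hc0 : c 0 = 0)
    (hr : ∀ k, r k = (A * b k + c k) % 10)
    (hc : ∀ k, c (k + 1) = (A * b k + c k) / 10) :
    ∀ k, ∀ i ≤ k,
      r i = (A * ∑ j ∈ Finset.range (k + 1), b j * 10 ^ j) / 10 ^ i % 10 :=
  stmt10_general A b c r hc0 hr hc
end
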